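/- Let B = 𝔽₂[ζ₁, ζ₂, ζ₃, …][y] be a polynomial ring over 𝔽₂ in countably many variables ζᵢ together with one further variable y, with the convention ζ₀ = 1. The 𝔽₂[y]-algebra endomorphism ψ of B determined by ψ(ζᵢ) = ζᵢ + ζ_{i−1}·y^{2^{i−1}} for all i ≥ 1 is an automorphism, and its inverse is the 𝔽₂[y]-algebra endomorphism sending ζₘ ↦ Σ_{i=0}^{m} ζᵢ·y^{2^m − 2^i} for every m ≥ 1. -/
import Mathlib


/-!
STATEMENT 2: In `B = 𝔽₂[ζ₁, ζ₂, …][y]` (with `ζ₀ = 1`), the `𝔽₂[y]`-algebra endomorphism `ψ`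
with `ψ(ζᵢ) = ζᵢ + ζ_{i−1}·y^{2^{i−1}}` is an automorphism, with inverse sending
`ζₘ ↦ Σ_{i=0}^{m} ζᵢ·y^{2^m − 2^i}`.

We model `B` as `MvPolynomial ℕ (Polynomial (ZMod 2))`, where the variable `X i` is `ζ_{i+1}`
and `y` is (the image of) `Polynomial.X`.
-/

open MvPolynomial

noncomputable section

abbrev B2 := MvPolynomial ℕ (Polynomial (ZMod 2))

/-- `zetaB 0 = 1` (the convention `ζ₀ = 1`) and `zetaB (i+1)` is the variable `ζ_{i+1}`. -/
def zetaB : ℕ → B2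
  | 0 => 1
  | i + 1 => X i

/-- the element `y`. -/
def yB : B2 := C Polynomial.X

theorem stmt_2
    (ψ τ : B2 →ₐ[Polynomial (ZMod 2)] B2)
    (hψ : ∀ i : ℕ, ψ (X i) = X i + zetaB i * yB ^ 2 ^ i)
    (hτ : ∀ i : ℕ, τ (X i) =
      ∑ j ∈ Finset.range (i + 2), zetaB j * yB ^ (2 ^ (i + 1) - 2 ^ j)) :
    ψ.comp τ = AlgHom.id _ _ ∧ τ.comp ψ = AlgHom.id _ _ ∧ Function.Bijective ψ := by
  have hyψ : ψ yB = yB := by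
    have := ψ.commutes Polynomial.X
    simp only [algebraMap_eq] at this
    exact this
  have hyτ : τ yB = yB := by
    have := τ.commutes Polynomial.X
    simp only [algebraMap_eq] at this
    exact this
  -- τ on zetaB, uniform in i
  have hτz : ∀ i : ℕ, τ (zetaB i) =
      ∑ j ∈ Finset.range (i + 1), zetaB j * yB ^ (2 ^ i - 2 ^ j) := by
    intro i
    cases i with
    | zero => simp [zetaB]
    | succ i => exact hτ i
  -- exponent identities
  have hexp1 : ∀ i j : ℕ, j ≤ i → 2 ^ j + (2 ^ (i + 1) - 2 ^ (j + 1)) = 2 ^ (i + 1) - 2 ^ j := by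
    intro i j hji
    have h2 : (2:ℕ) ^ (j + 1) = 2 ^ j + 2 ^ j := by rw [pow_succ]; ring
    have h3 : (2:ℕ) ^ (i + 1) = 2 ^ i + 2 ^ i := by rw [pow_succ]; ring
    rw [h2, h3]
    have h1 : (2:ℕ) ^ j ≤ 2 ^ i := Nat.pow_le_pow_right (by norm_num) hji
    generalize (2:ℕ) ^ j = a at *
    generalize (2:ℕ) ^ i = b at *
    omega
  have hexp2 : ∀ i j : ℕ, j ≤ i → (2 ^ i - 2 ^ j) + 2 ^ i = 2 ^ (i + 1) - 2 ^ j := by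
    intro i j hji
    have h2 : (2:ℕ) ^ (i + 1) = 2 ^ i + 2 ^ i := by rw [pow_succ]; ring
    rw [h2]
    have h1 : (2:ℕ) ^ j ≤ 2 ^ i := Nat.pow_le_pow_right (by norm_num) hji
    generalize (2:ℕ) ^ j = a at *
    generalize (2:ℕ) ^ i = b at *
    omega
  have h1 : ψ.comp τ = AlgHom.id (Polynomial (ZMod 2)) B2 := by
    apply MvPolynomial.algHom_ext
    intro i
    simp only [AlgHom.comp_apply, AlgHom.id_apply]
    rw [hτ i, map_sum]
    have key : ∀ j ∈ Finset.range (i + 1),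
        ψ (zetaB (j + 1) * yB ^ (2 ^ (i + 1) - 2 ^ (j + 1))) =
        zetaB (j + 1) * yB ^ (2 ^ (i + 1) - 2 ^ (j + 1)) +
          zetaB j * yB ^ (2 ^ (i + 1) - 2 ^ j) := by
      intro j hj
      rw [Finset.mem_range] at hj
      rw [map_mul, map_pow, hyψ]
      show ψ (X j) * _ = _
      rw [hψ j, add_mul, mul_assoc, ← pow_add, hexp1 i j (by omega)]
      rfl
    rw [Finset.sum_range_succ'
        (fun j => ψ (zetaB j * yB ^ (2 ^ (i + 1) - 2 ^ j))) (i + 1),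
      Finset.sum_congr rfl key]
    have h0 : ψ (zetaB 0 * yB ^ (2 ^ (i + 1) - 2 ^ 0)) =
        zetaB 0 * yB ^ (2 ^ (i + 1) - 2 ^ 0) := by
      rw [map_mul, map_pow, hyψ]
      show ψ 1 * _ = (1 : B2) * _
      rw [map_one]
    rw [h0, Finset.sum_add_distrib]
    have hshift : (∑ j ∈ Finset.range (i + 1),
          zetaB (j + 1) * yB ^ (2 ^ (i + 1) - 2 ^ (j + 1))) +
        zetaB 0 * yB ^ (2 ^ (i + 1) - 2 ^ 0) =
        ∑ j ∈ Finset.range (i + 2), zetaB j * yB ^ (2 ^ (i + 1) - 2 ^ j) :=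
      (Finset.sum_range_succ'
        (fun j => zetaB j * yB ^ (2 ^ (i + 1) - 2 ^ j)) (i + 1)).symm
    have hlast : (∑ j ∈ Finset.range (i + 2), zetaB j * yB ^ (2 ^ (i + 1) - 2 ^ j)) =
        (∑ j ∈ Finset.range (i + 1), zetaB j * yB ^ (2 ^ (i + 1) - 2 ^ j)) + X i := by
      rw [Finset.sum_range_succ]
      congr 1
      show zetaB (i + 1) * yB ^ (2 ^ (i + 1) - 2 ^ (i + 1)) = X i
      rw [Nat.sub_self, pow_zero, mul_one]
      rfl
    calc (∑ j ∈ Finset.range (i + 1), zetaB (j + 1) * yB ^ (2 ^ (i + 1) - 2 ^ (j + 1)))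
          + (∑ j ∈ Finset.range (i + 1), zetaB j * yB ^ (2 ^ (i + 1) - 2 ^ j))
          + zetaB 0 * yB ^ (2 ^ (i + 1) - 2 ^ 0)
        = ((∑ j ∈ Finset.range (i + 1), zetaB (j + 1) * yB ^ (2 ^ (i + 1) - 2 ^ (j + 1)))
            + zetaB 0 * yB ^ (2 ^ (i + 1) - 2 ^ 0))
          + ∑ j ∈ Finset.range (i + 1), zetaB j * yB ^ (2 ^ (i + 1) - 2 ^ j) :=
            add_right_comm _ _ _
      _ = ((∑ j ∈ Finset.range (i + 1), zetaB j * yB ^ (2 ^ (i + 1) - 2 ^ j)) + X i)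
          + ∑ j ∈ Finset.range (i + 1), zetaB j * yB ^ (2 ^ (i + 1) - 2 ^ j) := by
            rw [hshift, hlast]
      _ = X i + ((∑ j ∈ Finset.range (i + 1), zetaB j * yB ^ (2 ^ (i + 1) - 2 ^ j))
          + ∑ j ∈ Finset.range (i + 1), zetaB j * yB ^ (2 ^ (i + 1) - 2 ^ j)) := by
            rw [add_comm _ (X i), add_assoc]
      _ = X i := by rw [CharTwo.add_self_eq_zero, add_zero]
  have h2 : τ.comp ψ = AlgHom.id (Polynomial (ZMod 2)) B2 := by
    apply MvPolynomial.algHom_ext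
    intro i
    simp only [AlgHom.comp_apply, AlgHom.id_apply]
    rw [hψ i, map_add, map_mul, map_pow, hyτ, hτ i, hτz i, Finset.sum_mul]
    have key : ∀ j ∈ Finset.range (i + 1),
        zetaB j * yB ^ (2 ^ i - 2 ^ j) * yB ^ 2 ^ i =
        zetaB j * yB ^ (2 ^ (i + 1) - 2 ^ j) := by
      intro j hj
      rw [Finset.mem_range] at hj
      rw [mul_assoc, ← pow_add, hexp2 i j (by omega)]
    rw [Finset.sum_congr rfl key]
    have hlast : (∑ j ∈ Finset.range (i + 2), zetaB j * yB ^ (2 ^ (i + 1) - 2 ^ j)) =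
        (∑ j ∈ Finset.range (i + 1), zetaB j * yB ^ (2 ^ (i + 1) - 2 ^ j)) + X i := by
      rw [Finset.sum_range_succ]
      congr 1
      show zetaB (i + 1) * yB ^ (2 ^ (i + 1) - 2 ^ (i + 1)) = X i
      rw [Nat.sub_self, pow_zero, mul_one]
      rfl
    rw [hlast, add_right_comm, CharTwo.add_self_eq_zero, zero_add]
  refine ⟨h1, h2, ?_⟩
  have hl : Function.LeftInverse τ ψ := fun x => by
    simpa using DFunLike.congr_fun h2 x
  exact ⟨hl.injective, fun x => ⟨τ x, by simpa using DFunLike.congr_fun h1 x⟩⟩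

end
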